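/- arXiv:2101.06093 — 2 statements merged into one kernel-verified Lean document; each statement's English description precedes it below -/
import Mathlib

section
/- Let 0 < a < b < ∞, 0 < c < d < ∞, p, q > -1 and α, β > 0. If f : [a,b] × [c,d] → ℝ is of bounded variation in the sense of Arzelà, then its mixed Katugampola fractional integral I f is also of bounded variation in the sense of Arzelà on [a,b] × [c,d]. -/
open MeasureTheory Set Filter
open scoped Classical

/-- Mixed (left-hand sided) Katugampola fractional integral of a bivariate function. -/
noncomputable def mixedKI (a c p q α β : ℝ) (f : ℝ → ℝ → ℝ) (x y : ℝ) : ℝ :=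
  ((p + 1) ^ (1 - α) * (q + 1) ^ (1 - β) / (Real.Gamma α * Real.Gamma β)) *
    ∫ s in a..x, ∫ t in c..y,
      (x ^ (p + 1) - s ^ (p + 1)) ^ (α - 1) * (y ^ (q + 1) - t ^ (q + 1)) ^ (β - 1)
        * s ^ p * t ^ q * f s t

/-- Univariate Katugampola fractional integral. -/
noncomputable def KI (a p α : ℝ) (g : ℝ → ℝ) (x : ℝ) : ℝ :=
  ((p + 1) ^ (1 - α) / Real.Gamma α) *
    ∫ t in a..x, (x ^ (p + 1) - t ^ (p + 1)) ^ (α - 1) * t ^ p * g t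

/-- Bounded variation in the sense of Arzelà on `[a,b] × [c,d]`. -/
def ArzelaBV (a b c d : ℝ) (f : ℝ → ℝ → ℝ) : Prop :=
  ∃ M > 0, ∀ (m : ℕ) (x y : ℕ → ℝ),
    x 0 = a → x m = b → y 0 = c → y m = d →
    (∀ i < m, x i ≤ x (i + 1)) → (∀ i < m, y i ≤ y (i + 1)) →
    ∑ i ∈ Finset.range m, |f (x (i + 1)) (y (i + 1)) - f (x i) (y i)| ≤ M

/-- A bounded bivariate function, monotone (nondecreasing) in each variable on the rectangle. -/
def MonotoneRect (a b c d : ℝ) (g : ℝ → ℝ → ℝ) : Prop :=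
  (∃ M : ℝ, ∀ x ∈ Icc a b, ∀ y ∈ Icc c d, |g x y| ≤ M) ∧
  (∀ x ∈ Icc a b, ∀ x' ∈ Icc a b, x ≤ x' → ∀ y ∈ Icc c d, g x y ≤ g x' y) ∧
  (∀ y ∈ Icc c d, ∀ y' ∈ Icc c d, y ≤ y' → ∀ x ∈ Icc a b, g x y ≤ g x y')

/-- Graph of a bivariate function over the rectangle `[a,b] × [c,d]`, as a subset of `ℝ³`. -/
def graphRect (a b c d : ℝ) (f : ℝ → ℝ → ℝ) : Set (ℝ × ℝ × ℝ) :=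
  {p | p.1 ∈ Icc a b ∧ p.2.1 ∈ Icc c d ∧ p.2.2 = f p.1 p.2.1}

/-- A cube of the standard `δ`-mesh of `ℝ³`. -/
def meshCube (δ : ℝ) (i j k : ℤ) : Set (ℝ × ℝ × ℝ) :=
  Icc (i * δ) ((i + 1) * δ) ×ˢ Icc (j * δ) ((j + 1) * δ) ×ˢ Icc (k * δ) ((k + 1) * δ)

/-- Number of `δ`-mesh cubes of `ℝ³` that intersect `S`. -/
noncomputable def meshCount (δ : ℝ) (S : Set (ℝ × ℝ × ℝ)) : ℕ :=
  Nat.card {p : ℤ × ℤ × ℤ | (meshCube δ p.1 p.2.1 p.2.2 ∩ S).Nonempty}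

/-- Upper box (Minkowski) dimension of a subset of `ℝ³`. -/
noncomputable def upperBoxDim (S : Set (ℝ × ℝ × ℝ)) : ℝ :=
  limsup (fun δ : ℝ => Real.log (meshCount δ S) / (-Real.log δ)) (nhdsWithin 0 (Ioi 0))

/-- Lower box (Minkowski) dimension of a subset of `ℝ³`. -/
noncomputable def lowerBoxDim (S : Set (ℝ × ℝ × ℝ)) : ℝ :=
  liminf (fun δ : ℝ => Real.log (meshCount δ S) / (-Real.log δ)) (nhdsWithin 0 (Ioi 0))

/-- Maximum range of `f` over a subset `A` of the plane. -/
noncomputable def Rf (f : ℝ → ℝ → ℝ) (A : Set (ℝ × ℝ)) : ℝ :=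
  sSup {r | ∃ p ∈ A, ∃ q ∈ A, r = |f p.1 p.2 - f q.1 q.2|}

/-- The `(i,j)`-th sub-rectangle of the `m × n` uniform partition of `[a,b] × [c,d]`. -/
def subRect (a b c d : ℝ) (m n : ℕ) (i j : ℕ) : Set (ℝ × ℝ) :=
  Icc (a + ((i : ℝ) - 1) * (b - a) / m) (a + (i : ℝ) * (b - a) / m) ×ˢ
    Icc (c + ((j : ℝ) - 1) * (d - c) / n) (c + (j : ℝ) * (d - c) / n)

/-- The sequence `a₀ = a`, `aₙ = a + (b-a)/2 + ⋯ + (b-a)/2ⁿ = b - (b-a)/2ⁿ`. -/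
noncomputable def aseq (a b : ℝ) (n : ℕ) : ℝ := b - (b - a) / 2 ^ n

/-- The affine map `ψₙ : [aₙ₋₁, aₙ] → [a₀, a₁]`. -/
noncomputable def psiN (a b : ℝ) (n : ℕ) (x : ℝ) : ℝ :=
  2 ^ n * ((aseq a b 1 - aseq a b 0) * x + aseq a b 0 * aseq a b n
    - aseq a b 1 * aseq a b (n - 1)) / (b - a)

/-- The function `Fₙ(x,y) = (1/n) φ(ψₙ(x), y) + ((n-1)/n) φ(a₀, y)` (for `n = 1` this is `φ`). -/
noncomputable def Fseq (a b : ℝ) (φ : ℝ → ℝ → ℝ) (n : ℕ) (x y : ℝ) : ℝ :=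
  (1 / (n : ℝ)) * φ (psiN a b n x) y + (((n : ℝ) - 1) / (n : ℝ)) * φ (aseq a b 0) y

/-!
An Arzelà-BV function is, on the rectangle, the difference of two nonnegative functions that are
nondecreasing in each variable: its Arzelà variation over `[a, s] × [c, t]` (plus a constant), and
that variation minus `f`. The mixed integral is the iterated univariate Katugampola integral, and
the univariate integral preserves nonnegativity and monotonicity: substituting
`t ^ (p + 1) = a ^ (p + 1) + r (x ^ (p + 1) - a ^ (p + 1))` turns it into
`(x ^ (p + 1) - a ^ (p + 1)) ^ α / (p + 1) * ∫₀¹ (1 - r) ^ (α - 1) g (t(r)) dr`, where every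
factor grows with `x`. Finally, along a monotone chain the variation of a difference of two
functions that are monotone in each variable telescopes.
-/

section Substitution

variable {a p x x' r : ℝ}

/-- Maps `(0, 1)` onto `(a, x)` and turns the Katugampola kernel into a multiple of
`(1 - r) ^ (α - 1)`. -/
noncomputable def katSubst (a p x r : ℝ) : ℝ :=
  (a ^ (p + 1) + r * (x ^ (p + 1) - a ^ (p + 1))) ^ (p + 1)⁻¹

noncomputable def katSubstDeriv (a p x r : ℝ) : ℝ :=
  (x ^ (p + 1) - a ^ (p + 1)) * (p + 1)⁻¹ *
    (a ^ (p + 1) + r * (x ^ (p + 1) - a ^ (p + 1))) ^ ((p + 1)⁻¹ - 1)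

lemma rpow_add_one_le_rpow_add_one (ha : 0 < a) (hp : -1 < p) (hax : a ≤ x) :
    a ^ (p + 1) ≤ x ^ (p + 1) :=
  Real.rpow_le_rpow ha.le hax (by linarith)

lemma katSubst_mem_Icc (ha : 0 < a) (hp : -1 < p) (hax : a ≤ x) (hr : r ∈ Icc (0 : ℝ) 1) :
    katSubst a p x r ∈ Icc a x := by
  have hA := Real.rpow_pos_of_pos ha (p + 1)
  have hAX := rpow_add_one_le_rpow_add_one ha hp hax
  have hinv : 0 ≤ (p + 1)⁻¹ := inv_nonneg.2 (by linarith)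
  have hp1 : p + 1 ≠ 0 := by linarith
  constructor
  · calc a = (a ^ (p + 1)) ^ (p + 1)⁻¹ := (Real.rpow_rpow_inv ha.le hp1).symm
      _ ≤ katSubst a p x r := Real.rpow_le_rpow hA.le (by nlinarith [hr.1]) hinv
  · calc katSubst a p x r ≤ (x ^ (p + 1)) ^ (p + 1)⁻¹ :=
          Real.rpow_le_rpow (by nlinarith [hr.1, hr.2]) (by nlinarith [hr.2]) hinv
      _ = x := Real.rpow_rpow_inv (ha.trans_le hax).le hp1

lemma katSubst_mono (ha : 0 < a) (hp : -1 < p) (hax : a ≤ x) (hxx' : x ≤ x')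
    (hr : r ∈ Icc (0 : ℝ) 1) : katSubst a p x r ≤ katSubst a p x' r := by
  have hA := Real.rpow_pos_of_pos ha (p + 1)
  have hAX := rpow_add_one_le_rpow_add_one ha hp hax
  have hXX' := rpow_add_one_le_rpow_add_one (ha.trans_le hax) hp hxx'
  exact Real.rpow_le_rpow (by nlinarith [hr.1]) (by nlinarith [hr.1])
    (inv_nonneg.2 (by linarith))

lemma strictMonoOn_katSubst (ha : 0 < a) (hp : -1 < p) (hax : a < x) :
    StrictMonoOn (katSubst a p x) (Icc 0 1) := by
  intro r hr r' _ hrr'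
  have hA := Real.rpow_pos_of_pos ha (p + 1)
  have hAX : a ^ (p + 1) < x ^ (p + 1) := Real.rpow_lt_rpow ha.le hax (by linarith)
  exact Real.rpow_lt_rpow (by nlinarith [hr.1]) (by nlinarith) (inv_pos.2 (by linarith))

lemma katSubst_image_Ioo (ha : 0 < a) (hp : -1 < p) (hax : a < x) :
    katSubst a p x '' Ioo 0 1 = Ioo a x := by
  have hp1 : 0 < p + 1 := by linarith
  have hAX : a ^ (p + 1) < x ^ (p + 1) := Real.rpow_lt_rpow ha.le hax hp1
  have hsub := strictMonoOn_katSubst ha hp hax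
  ext t
  constructor
  · rintro ⟨r, hr, rfl⟩
    have h0 : katSubst a p x 0 = a := by
      rw [katSubst, zero_mul, add_zero, Real.rpow_rpow_inv ha.le hp1.ne']
    have h1 : katSubst a p x 1 = x := by
      rw [katSubst, one_mul, add_sub_cancel, Real.rpow_rpow_inv (ha.trans hax).le hp1.ne']
    have hr' := Ioo_subset_Icc_self hr
    constructor
    · simpa only [h0] using hsub (left_mem_Icc.2 zero_le_one) hr' hr.1
    · simpa only [h1] using hsub hr' (right_mem_Icc.2 zero_le_one) hr.2
  · rintro ⟨hat, htx⟩
    have ht : 0 < t := ha.trans hat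
    have hAt : a ^ (p + 1) < t ^ (p + 1) := Real.rpow_lt_rpow ha.le hat hp1
    have htX : t ^ (p + 1) < x ^ (p + 1) := Real.rpow_lt_rpow ht.le htx hp1
    refine ⟨(t ^ (p + 1) - a ^ (p + 1)) / (x ^ (p + 1) - a ^ (p + 1)),
      ⟨div_pos (by linarith) (by linarith), (div_lt_one (by linarith)).2 (by linarith)⟩, ?_⟩
    rw [katSubst, div_mul_cancel₀ _ (by linarith), add_sub_cancel, Real.rpow_rpow_inv ht.le hp1.ne']

lemma hasDerivAt_katSubst (ha : 0 < a) (hp : -1 < p) (hax : a ≤ x) (hr : 0 ≤ r) :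
    HasDerivAt (katSubst a p x) (katSubstDeriv a p x r) r := by
  have hA := Real.rpow_pos_of_pos ha (p + 1)
  have hAX := rpow_add_one_le_rpow_add_one ha hp hax
  exact ((hasDerivAt_mul_const _).const_add _).rpow_const (Or.inl (by nlinarith))

lemma hasDerivWithinAt_katSubst (ha : 0 < a) (hp : -1 < p) (hax : a ≤ x) :
    ∀ r ∈ Ioo (0 : ℝ) 1, HasDerivWithinAt (katSubst a p x) (katSubstDeriv a p x r) (Ioo 0 1) r :=
  fun _ hr => (hasDerivAt_katSubst ha hp hax hr.1.le).hasDerivWithinAt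

variable {α : ℝ}

lemma katSubstDeriv_smul_kernel (ha : 0 < a) (hp : -1 < p) (hax : a < x) (g : ℝ → ℝ)
    (hr : r ∈ Ioo (0 : ℝ) 1) :
    |katSubstDeriv a p x r| • ((x ^ (p + 1) - katSubst a p x r ^ (p + 1)) ^ (α - 1) *
        katSubst a p x r ^ p * g (katSubst a p x r)) =
      (x ^ (p + 1) - a ^ (p + 1)) ^ α / (p + 1) * ((1 - r) ^ (α - 1) * g (katSubst a p x r)) := by
  have hp1 : 0 < p + 1 := by linarith
  have hA := Real.rpow_pos_of_pos ha (p + 1)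
  have hAX : a ^ (p + 1) < x ^ (p + 1) := Real.rpow_lt_rpow ha.le hax hp1
  set A := a ^ (p + 1)
  set X := x ^ (p + 1)
  set u := A + r * (X - A)
  have hu0 : 0 < u := by nlinarith [hr.1]
  have hφ : katSubst a p x r = u ^ (p + 1)⁻¹ := rfl
  have hφ_pow : katSubst a p x r ^ (p + 1) = u := Real.rpow_inv_rpow hu0.le hp1.ne'
  have hφ_pow' : katSubst a p x r ^ p = u ^ (p * (p + 1)⁻¹) := by
    rw [hφ, ← Real.rpow_mul hu0.le, mul_comm]
  have hcancel : u ^ ((p + 1)⁻¹ - 1) * u ^ (p * (p + 1)⁻¹) = 1 := by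
    rw [← Real.rpow_add hu0, show (p + 1)⁻¹ - 1 + p * (p + 1)⁻¹ = 0 by field_simp; ring,
      Real.rpow_zero]
  have hXA : (X - A) ^ (α - 1) * (X - A) = (X - A) ^ α := by
    rw [← Real.rpow_add_one (by linarith), sub_add_cancel]
  have hderiv : 0 ≤ katSubstDeriv a p x r := by
    unfold katSubstDeriv
    have := Real.rpow_pos_of_pos hu0 ((p + 1)⁻¹ - 1)
    have : 0 < X - A := by linarith
    positivity
  rw [abs_of_nonneg hderiv, smul_eq_mul, hφ_pow, hφ_pow', show X - u = (1 - r) * (X - A) by ring,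
    Real.mul_rpow (by linarith [hr.2]) (by linarith), katSubstDeriv]
  linear_combination ((1 - r) ^ (α - 1) * g (katSubst a p x r) * (X - A) * (X - A) ^ (α - 1) /
    (p + 1)) * hcancel + ((1 - r) ^ (α - 1) * g (katSubst a p x r) / (p + 1)) * hXA

end Substitution

section KatugampolaIntegral

variable {a p α x x' : ℝ} {g g₁ g₂ : ℝ → ℝ}

lemma integral_KI_kernel_eq_integral_katSubst (ha : 0 < a) (hp : -1 < p) (hax : a < x)
    (g : ℝ → ℝ) :
    ∫ t in a..x, (x ^ (p + 1) - t ^ (p + 1)) ^ (α - 1) * t ^ p * g t =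
      (x ^ (p + 1) - a ^ (p + 1)) ^ α / (p + 1) *
        ∫ r in Ioo 0 1, (1 - r) ^ (α - 1) * g (katSubst a p x r) := by
  rw [intervalIntegral.integral_of_le hax.le, integral_Ioc_eq_integral_Ioo,
    ← katSubst_image_Ioo ha hp hax, integral_image_eq_integral_abs_deriv_smul measurableSet_Ioo
      (hasDerivWithinAt_katSubst ha hp hax.le)
      ((strictMonoOn_katSubst ha hp hax).injOn.mono Ioo_subset_Icc_self),
    ← integral_const_mul]
  exact setIntegral_congr_fun measurableSet_Ioo fun _ hr =>
    katSubstDeriv_smul_kernel ha hp hax g hr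

lemma integrableOn_KI_kernel_iff (ha : 0 < a) (hp : -1 < p) (hax : a < x) (g : ℝ → ℝ) :
    IntegrableOn (fun t => (x ^ (p + 1) - t ^ (p + 1)) ^ (α - 1) * t ^ p * g t) (Ioo a x) ↔
      IntegrableOn (fun r => (1 - r) ^ (α - 1) * g (katSubst a p x r)) (Ioo 0 1) := by
  have hAX : a ^ (p + 1) < x ^ (p + 1) := Real.rpow_lt_rpow ha.le hax (by linarith)
  have hcoeff : (x ^ (p + 1) - a ^ (p + 1)) ^ α / (p + 1) ≠ 0 :=
    div_ne_zero (Real.rpow_pos_of_pos (by linarith) α).ne' (by linarith)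
  rw [← katSubst_image_Ioo ha hp hax, integrableOn_image_iff_integrableOn_abs_deriv_smul
      measurableSet_Ioo (hasDerivWithinAt_katSubst ha hp hax.le)
      ((strictMonoOn_katSubst ha hp hax).injOn.mono Ioo_subset_Icc_self),
    integrableOn_congr_fun (fun _ hr => katSubstDeriv_smul_kernel ha hp hax g hr)
      measurableSet_Ioo]
  exact integrable_const_mul_iff hcoeff.isUnit _

lemma integrableOn_one_sub_rpow (hα : 0 < α) :
    IntegrableOn (fun r : ℝ => (1 - r) ^ (α - 1)) (Ioo 0 1) := by
  have h := ((intervalIntegral.intervalIntegrable_rpow' (a := 0) (b := 1) (r := α - 1)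
    (by linarith)).comp_sub_left 1).symm
  rw [sub_zero, sub_self] at h
  exact (intervalIntegrable_iff_integrableOn_Ioo_of_le zero_le_one).1 h

lemma integrableOn_katSubst_of_monotone (ha : 0 < a) (hp : -1 < p) (hα : 0 < α) (hax : a ≤ x)
    (hg : Monotone g) :
    IntegrableOn (fun r => (1 - r) ^ (α - 1) * g (katSubst a p x r)) (Ioo 0 1) := by
  refine (integrableOn_one_sub_rpow hα).mul_bdd (c := max |g a| |g x|)
    (hg.measurable.comp (by unfold katSubst; fun_prop)).aestronglyMeasurable ?_
  filter_upwards [ae_restrict_mem measurableSet_Ioo] with r hr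
  have hmem := katSubst_mem_Icc ha hp hax (Ioo_subset_Icc_self hr)
  exact abs_le_max_abs_abs (hg hmem.1) (hg hmem.2)

lemma intervalIntegrable_KI_kernel (ha : 0 < a) (hp : -1 < p) (hα : 0 < α) (hax : a ≤ x)
    (hg : Monotone g) :
    IntervalIntegrable (fun t => (x ^ (p + 1) - t ^ (p + 1)) ^ (α - 1) * t ^ p * g t)
      volume a x := by
  rcases hax.eq_or_lt with rfl | hax
  · exact IntervalIntegrable.refl
  · rw [intervalIntegrable_iff_integrableOn_Ioo_of_le hax.le,
      integrableOn_KI_kernel_iff ha hp hax]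
    exact integrableOn_katSubst_of_monotone ha hp hα hax.le hg

lemma KI_coeff_pos (hp : -1 < p) (hα : 0 < α) : 0 < (p + 1) ^ (1 - α) / Real.Gamma α :=
  div_pos (Real.rpow_pos_of_pos (by linarith) _) (Real.Gamma_pos_of_pos hα)

lemma KI_kernel_nonneg (ha : 0 < a) (hp : -1 < p) {t : ℝ} (ht : t ∈ Icc a x) :
    0 ≤ (x ^ (p + 1) - t ^ (p + 1)) ^ (α - 1) * t ^ p := by
  have ht0 : 0 < t := ha.trans_le ht.1
  have := rpow_add_one_le_rpow_add_one ht0 hp ht.2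
  exact mul_nonneg (Real.rpow_nonneg (by linarith) _) (Real.rpow_nonneg ht0.le _)

lemma KI_nonneg (ha : 0 < a) (hp : -1 < p) (hα : 0 < α) (hax : a ≤ x)
    (hg : ∀ t ∈ Icc a x, 0 ≤ g t) : 0 ≤ KI a p α g x :=
  mul_nonneg (KI_coeff_pos hp hα).le <| intervalIntegral.integral_nonneg hax fun t ht =>
    mul_nonneg (KI_kernel_nonneg ha hp ht) (hg t ht)

lemma KI_mono (ha : 0 < a) (hp : -1 < p) (hα : 0 < α) (hax : a ≤ x) (hg₁ : Monotone g₁)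
    (hg₂ : Monotone g₂) (h : ∀ t ∈ Icc a x, g₁ t ≤ g₂ t) : KI a p α g₁ x ≤ KI a p α g₂ x :=
  mul_le_mul_of_nonneg_left (intervalIntegral.integral_mono_on hax
    (intervalIntegrable_KI_kernel ha hp hα hax hg₁) (intervalIntegrable_KI_kernel ha hp hα hax hg₂)
    fun t ht => mul_le_mul_of_nonneg_left (h t ht) (KI_kernel_nonneg ha hp ht))
    (KI_coeff_pos hp hα).le

lemma KI_eq_sub (ha : 0 < a) (hp : -1 < p) (hα : 0 < α) (hax : a ≤ x) {f : ℝ → ℝ}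
    (hg₁ : Monotone g₁) (hg₂ : Monotone g₂) (hf : ∀ t ∈ Icc a x, f t = g₁ t - g₂ t) :
    KI a p α f x = KI a p α g₁ x - KI a p α g₂ x := by
  rw [KI, KI, KI, ← mul_sub, ← intervalIntegral.integral_sub
    (intervalIntegrable_KI_kernel ha hp hα hax hg₁) (intervalIntegrable_KI_kernel ha hp hα hax hg₂)]
  congr 1
  refine intervalIntegral.integral_congr fun t ht => ?_
  rw [uIcc_of_le hax] at ht
  simp only [hf t ht]
  ring

lemma KI_monotoneOn (ha : 0 < a) (hp : -1 < p) (hα : 0 < α) (hg : Monotone g)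
    (hg₀ : ∀ t, a ≤ t → 0 ≤ g t) : MonotoneOn (KI a p α g) (Ici a) := by
  intro x hx x' hx' hxx'
  rcases (show a ≤ x from hx).eq_or_lt with rfl | hax
  · rw [KI, intervalIntegral.integral_same, mul_zero]
    exact KI_nonneg ha hp hα hx' fun t ht => hg₀ t ht.1
  have hax' := hax.trans_le hxx'
  have hAX := rpow_add_one_le_rpow_add_one ha hp hax.le
  have hXX' := rpow_add_one_le_rpow_add_one (ha.trans hax) hp hxx'
  have hp1 : 0 < p + 1 := by linarith
  refine mul_le_mul_of_nonneg_left ?_ (KI_coeff_pos hp hα).le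
  rw [integral_KI_kernel_eq_integral_katSubst ha hp hax,
    integral_KI_kernel_eq_integral_katSubst ha hp hax']
  refine mul_le_mul ?_ ?_ ?_ ?_
  · gcongr
  · refine setIntegral_mono_on (integrableOn_katSubst_of_monotone ha hp hα hax.le hg)
      (integrableOn_katSubst_of_monotone ha hp hα hax'.le hg) measurableSet_Ioo fun r hr => ?_
    exact mul_le_mul_of_nonneg_left
      (hg (katSubst_mono ha hp hax.le hxx' (Ioo_subset_Icc_self hr)))
      (Real.rpow_nonneg (by linarith [hr.2]) _)
  · refine setIntegral_nonneg measurableSet_Ioo fun r hr => mul_nonneg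
      (Real.rpow_nonneg (by linarith [hr.2]) _) (hg₀ _ ?_)
    exact (katSubst_mem_Icc ha hp hax.le (Ioo_subset_Icc_self hr)).1
  · exact div_nonneg (Real.rpow_nonneg (by linarith) _) hp1.le

end KatugampolaIntegral

section MixedKatugampolaIntegral

variable {a b c d p q α β x y : ℝ}

lemma mixedKI_eq_KI_KI (a c p q α β : ℝ) (f : ℝ → ℝ → ℝ) (x y : ℝ) :
    mixedKI a c p q α β f x y = KI a p α (fun s => KI c q β (f s) y) x := by
  simp only [mixedKI, KI, ← intervalIntegral.integral_const_mul]
  congr 1 with s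
  congr 1 with t
  ring

lemma monotone_KI_slice (hc : 0 < c) (hq : -1 < q) (hβ : 0 < β) (hcy : c ≤ y)
    {g : ℝ → ℝ → ℝ} (hg : Monotone (Function.uncurry g)) : Monotone fun s => KI c q β (g s) y :=
  fun s s' hss' => KI_mono hc hq hβ hcy ((monotone_prod_iff.1 hg).1 s)
    ((monotone_prod_iff.1 hg).1 s') fun t _ => (monotone_prod_iff.1 hg).2 t hss'

variable (ha : 0 < a) (hc : 0 < c) (hp : -1 < p) (hq : -1 < q) (hα : 0 < α) (hβ : 0 < β)
include ha hc hp hq hα hβ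

lemma monotoneOn_KI_KI {g : ℝ → ℝ → ℝ} (hg₀ : 0 ≤ g) (hg : Monotone (Function.uncurry g)) :
    MonotoneOn (Function.uncurry fun x y => KI a p α (fun s => KI c q β (g s) y) x)
      (Ici a ×ˢ Ici c) := by
  rintro ⟨x, y⟩ ⟨hx, hy⟩ ⟨x', y'⟩ ⟨hx', hy'⟩ ⟨hxx', hyy'⟩
  have hgs : ∀ s, Monotone (g s) := (monotone_prod_iff.1 hg).1
  calc KI a p α (fun s => KI c q β (g s) y) x
      ≤ KI a p α (fun s => KI c q β (g s) y) x' :=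
        KI_monotoneOn ha hp hα (monotone_KI_slice hc hq hβ hy hg)
          (fun s _ => KI_nonneg hc hq hβ hy fun t _ => hg₀ s t) hx hx' hxx'
    _ ≤ KI a p α (fun s => KI c q β (g s) y') x' :=
        KI_mono ha hp hα hx' (monotone_KI_slice hc hq hβ hy hg)
          (monotone_KI_slice hc hq hβ hy' hg) fun s _ =>
            KI_monotoneOn hc hq hβ (hgs s) (fun t _ => hg₀ s t) hy hy' hyy'

lemma KI_KI_eq_sub {f g h : ℝ → ℝ → ℝ} (hg : Monotone (Function.uncurry g))
    (hh : Monotone (Function.uncurry h))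
    (hf : ∀ s ∈ Icc a b, ∀ t ∈ Icc c d, f s t = g s t - h s t) (hx : x ∈ Icc a b)
    (hy : y ∈ Icc c d) :
    KI a p α (fun s => KI c q β (f s) y) x =
      KI a p α (fun s => KI c q β (g s) y) x - KI a p α (fun s => KI c q β (h s) y) x :=
  KI_eq_sub ha hp hα hx.1 (monotone_KI_slice hc hq hβ hy.1 hg)
    (monotone_KI_slice hc hq hβ hy.1 hh) fun s hs =>
      KI_eq_sub hc hq hβ hy.1 ((monotone_prod_iff.1 hg).1 s) ((monotone_prod_iff.1 hh).1 s)
        fun t ht => hf s ⟨hs.1, hs.2.trans hx.2⟩ t ⟨ht.1, ht.2.trans hy.2⟩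

end MixedKatugampolaIntegral

section ArzelaVariation

variable {a b c d x y x' y' r : ℝ} {f : ℝ → ℝ → ℝ}

def chainVariations (a c : ℝ) (f : ℝ → ℝ → ℝ) (x y : ℝ) : Set ℝ :=
  {r | ∃ (m : ℕ) (u w : ℕ → ℝ), u 0 = a ∧ u m = x ∧ w 0 = c ∧ w m = y ∧
    (∀ i < m, u i ≤ u (i + 1)) ∧ (∀ i < m, w i ≤ w (i + 1)) ∧
    r = ∑ i ∈ Finset.range m, |f (u (i + 1)) (w (i + 1)) - f (u i) (w i)|}

noncomputable def arzelaVariation (a c : ℝ) (f : ℝ → ℝ → ℝ) (x y : ℝ) : ℝ :=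
  sSup (chainVariations a c f x y)

lemma zero_mem_chainVariations : (0 : ℝ) ∈ chainVariations a c f a c :=
  ⟨0, fun _ => a, fun _ => c, rfl, rfl, rfl, rfl, by simp, by simp, by simp⟩

lemma add_abs_sub_mem_chainVariations (hr : r ∈ chainVariations a c f x y) (hxx' : x ≤ x')
    (hyy' : y ≤ y') : r + |f x' y' - f x y| ∈ chainVariations a c f x' y' := by
  obtain ⟨m, u, w, hu0, hum, hw0, hwm, hu, hw, rfl⟩ := hr
  refine ⟨m + 1, fun i => if i ≤ m then u i else x', fun i => if i ≤ m then w i else y',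
    by simpa using hu0, by simp, by simpa using hw0, by simp, fun i hi => ?_, fun i hi => ?_, ?_⟩
  · rcases (Nat.lt_succ_iff.1 hi).lt_or_eq with hi | rfl
    · simpa [hi.le, Nat.succ_le_of_lt hi] using hu i hi
    · simpa [hum] using hxx'
  · rcases (Nat.lt_succ_iff.1 hi).lt_or_eq with hi | rfl
    · simpa [hi.le, Nat.succ_le_of_lt hi] using hw i hi
    · simpa [hwm] using hyy'
  · rw [Finset.sum_range_succ]
    congr 1
    · refine Finset.sum_congr rfl fun i hi => ?_
      have hi := Finset.mem_range.1 hi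
      simp [hi.le, Nat.succ_le_of_lt hi]
    · simp [hum, hwm]

lemma abs_sub_mem_chainVariations (hax : a ≤ x) (hcy : c ≤ y) :
    |f x y - f a c| ∈ chainVariations a c f x y := by
  simpa using add_abs_sub_mem_chainVariations (f := f) zero_mem_chainVariations hax hcy

lemma ArzelaBV.bddAbove_chainVariations (hf : ArzelaBV a b c d f) (hxb : x ≤ b) (hyd : y ≤ d) :
    BddAbove (chainVariations a c f x y) := by
  obtain ⟨M, -, hM⟩ := hf
  refine ⟨M, fun r hr => ?_⟩
  obtain ⟨m, u, w, hu0, hum, hw0, hwm, hu, hw, hsum⟩ :=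
    add_abs_sub_mem_chainVariations hr hxb hyd
  linarith [hM m u w hu0 hum hw0 hwm hu hw, abs_nonneg (f b d - f x y)]

lemma ArzelaBV.abs_sub_le_arzelaVariation (hf : ArzelaBV a b c d f) (hax : a ≤ x) (hxb : x ≤ b)
    (hcy : c ≤ y) (hyd : y ≤ d) : |f x y - f a c| ≤ arzelaVariation a c f x y :=
  le_csSup (hf.bddAbove_chainVariations hxb hyd) (abs_sub_mem_chainVariations hax hcy)

lemma ArzelaBV.arzelaVariation_add_abs_sub_le (hf : ArzelaBV a b c d f) (hax : a ≤ x)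
    (hcy : c ≤ y) (hxx' : x ≤ x') (hyy' : y ≤ y') (hx'b : x' ≤ b) (hy'd : y' ≤ d) :
    arzelaVariation a c f x y + |f x' y' - f x y| ≤ arzelaVariation a c f x' y' := by
  rw [← le_sub_iff_add_le]
  exact csSup_le ⟨_, abs_sub_mem_chainVariations hax hcy⟩ fun r hr => le_sub_iff_add_le.2 <|
    le_csSup (hf.bddAbove_chainVariations hx'b hy'd) (add_abs_sub_mem_chainVariations hr hxx' hyy')

/-- Jordan decomposition: `g = V + |f(a,c)|` and `h = V - f + |f(a,c)|`, where `V` is the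
Arzelà variation over `[a, s] × [c, t]`, extended constantly outside the rectangle. -/
theorem ArzelaBV.exists_monotone_sub (hab : a ≤ b) (hcd : c ≤ d) (hf : ArzelaBV a b c d f) :
    ∃ g h : ℝ → ℝ → ℝ, 0 ≤ g ∧ 0 ≤ h ∧ Monotone (Function.uncurry g) ∧
      Monotone (Function.uncurry h) ∧ ∀ s ∈ Icc a b, ∀ t ∈ Icc c d, f s t = g s t - h s t := by
  set π₁ : ℝ → ℝ := fun s => projIcc a b hab s
  set π₂ : ℝ → ℝ := fun t => projIcc c d hcd t
  have hπ₁ : Monotone π₁ := fun _ _ h => monotone_projIcc hab h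
  have hπ₂ : Monotone π₂ := fun _ _ h => monotone_projIcc hcd h
  set V : ℝ → ℝ → ℝ := fun s t => arzelaVariation a c f (π₁ s) (π₂ t)
  have hV : ∀ s t, |f (π₁ s) (π₂ t) - f a c| ≤ V s t := fun s t =>
    hf.abs_sub_le_arzelaVariation (projIcc a b hab s).2.1 (projIcc a b hab s).2.2
      (projIcc c d hcd t).2.1 (projIcc c d hcd t).2.2
  have hV_step : ∀ s s' t t', s ≤ s' → t ≤ t' →
      V s t + |f (π₁ s') (π₂ t') - f (π₁ s) (π₂ t)| ≤ V s' t' := fun s s' t t' hs ht =>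
    hf.arzelaVariation_add_abs_sub_le (projIcc a b hab s).2.1 (projIcc c d hcd t).2.1
      (hπ₁ hs) (hπ₂ ht) (projIcc a b hab s').2.2 (projIcc c d hcd t').2.2
  refine ⟨fun s t => V s t + |f a c|, fun s t => V s t - f (π₁ s) (π₂ t) + |f a c|,
    fun s t => ?_, fun s t => ?_, ?_, ?_, fun s hs t ht => ?_⟩
  · have := hV s t
    dsimp only [Pi.zero_apply]
    linarith [abs_nonneg (f (π₁ s) (π₂ t) - f a c), abs_nonneg (f a c)]
  · have := hV s t
    dsimp only [Pi.zero_apply]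
    linarith [le_abs_self (f (π₁ s) (π₂ t) - f a c), le_abs_self (f a c)]
  · rintro ⟨s, t⟩ ⟨s', t'⟩ ⟨hs, ht⟩
    dsimp only [Function.uncurry_apply_pair]
    linarith [hV_step s s' t t' hs ht, abs_nonneg (f (π₁ s') (π₂ t') - f (π₁ s) (π₂ t))]
  · rintro ⟨s, t⟩ ⟨s', t'⟩ ⟨hs, ht⟩
    dsimp only [Function.uncurry_apply_pair]
    linarith [hV_step s s' t t' hs ht, le_abs_self (f (π₁ s') (π₂ t') - f (π₁ s) (π₂ t))]
  · have hs' : π₁ s = s := congrArg Subtype.val (projIcc_of_mem hab hs)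
    have ht' : π₂ t = t := congrArg Subtype.val (projIcc_of_mem hcd ht)
    dsimp only
    rw [hs', ht']
    ring

lemma mem_Icc_of_chain {m i : ℕ} {u : ℕ → ℝ} (hu0 : u 0 = a) (hum : u m = b)
    (hu : ∀ i < m, u i ≤ u (i + 1)) (hi : i ≤ m) : u i ∈ Icc a b := by
  have hmono : MonotoneOn u (Iic m) := monotoneOn_of_le_succ ordConnected_Iic
    fun j _ _ hj => hu j (Order.succ_le_iff.1 hj)
  exact ⟨hu0 ▸ hmono (Nat.zero_le m) hi (Nat.zero_le i), hum ▸ hmono hi (mem_Iic.2 le_rfl) hi⟩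

/-- The variation of `g - h` along a monotone chain telescopes. -/
lemma arzelaBV_of_monotoneOn_sub (hab : a ≤ b) (hcd : c ≤ d) {g h : ℝ → ℝ → ℝ}
    (hg : MonotoneOn (Function.uncurry g) (Icc a b ×ˢ Icc c d))
    (hh : MonotoneOn (Function.uncurry h) (Icc a b ×ˢ Icc c d))
    (hf : ∀ s ∈ Icc a b, ∀ t ∈ Icc c d, f s t = g s t - h s t) : ArzelaBV a b c d f := by
  have hac : (a, c) ∈ Icc a b ×ˢ Icc c d := ⟨left_mem_Icc.2 hab, left_mem_Icc.2 hcd⟩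
  have hbd : (b, d) ∈ Icc a b ×ˢ Icc c d := ⟨right_mem_Icc.2 hab, right_mem_Icc.2 hcd⟩
  refine ⟨g b d - g a c + (h b d - h a c) + 1, ?_, fun m x y hx0 hxm hy0 hym hx hy => ?_⟩
  · have hg_ac : g a c ≤ g b d := hg hac hbd ⟨hab, hcd⟩
    have hh_ac : h a c ≤ h b d := hh hac hbd ⟨hab, hcd⟩
    linarith
  have hmem : ∀ i ≤ m, (x i, y i) ∈ Icc a b ×ˢ Icc c d := fun i hi =>
    ⟨mem_Icc_of_chain hx0 hxm hx hi, mem_Icc_of_chain hy0 hym hy hi⟩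
  calc ∑ i ∈ Finset.range m, |f (x (i + 1)) (y (i + 1)) - f (x i) (y i)|
      ≤ ∑ i ∈ Finset.range m, ((g (x (i + 1)) (y (i + 1)) - g (x i) (y i)) +
          (h (x (i + 1)) (y (i + 1)) - h (x i) (y i))) := by
        refine Finset.sum_le_sum fun i hi => ?_
        have hi := Finset.mem_range.1 hi
        have hzi := hmem i hi.le
        have hzi' := hmem (i + 1) hi
        have hgi : g (x i) (y i) ≤ g (x (i + 1)) (y (i + 1)) := hg hzi hzi' ⟨hx i hi, hy i hi⟩
        have hhi : h (x i) (y i) ≤ h (x (i + 1)) (y (i + 1)) := hh hzi hzi' ⟨hx i hi, hy i hi⟩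
        rw [hf _ hzi.1 _ hzi.2, hf _ hzi'.1 _ hzi'.2, abs_le]
        constructor <;> linarith
    _ = g b d - g a c + (h b d - h a c) := by
        rw [Finset.sum_add_distrib, Finset.sum_range_sub (fun i => g (x i) (y i)),
          Finset.sum_range_sub (fun i => h (x i) (y i))]
        simp only [hx0, hxm, hy0, hym]
    _ ≤ _ := le_add_of_nonneg_right zero_le_one

end ArzelaVariation

/-- the mixed Katugampola fractional integral preserves bounded
variation in the sense of Arzelà. -/
theorem mixedKI_arzelaBV (a b c d p q α β : ℝ)
    (ha : 0 < a) (hab : a < b) (hc : 0 < c) (hcd : c < d)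
    (hp : -1 < p) (hq : -1 < q) (hα : 0 < α) (hβ : 0 < β)
    (f : ℝ → ℝ → ℝ) (hf : ArzelaBV a b c d f) :
    ArzelaBV a b c d (fun x y => mixedKI a c p q α β f x y) := by
  obtain ⟨g, h, hg₀, hh₀, hg, hh, hfgh⟩ := hf.exists_monotone_sub hab.le hcd.le
  have hR : Icc a b ×ˢ Icc c d ⊆ Ici a ×ˢ Ici c := prod_mono Icc_subset_Ici_self Icc_subset_Ici_self
  refine arzelaBV_of_monotoneOn_sub hab.le hcd.le
    ((monotoneOn_KI_KI ha hc hp hq hα hβ hg₀ hg).mono hR)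
    ((monotoneOn_KI_KI ha hc hp hq hα hβ hh₀ hh).mono hR) fun x hx y hy => ?_
  rw [mixedKI_eq_KI_KI]
  exact KI_KI_eq_sub ha hc hp hq hα hβ hg hh hfgh hx hy
end

section
/- Let 0 < a < b < ∞, 0 < c < d < ∞, -1 < p, q ≤ 0 and α, β ≥ 1. If f : [a,b] × [c,d] → ℝ is continuous, then dim_H(G(I f)) = dim_B(G(I f)) = 2, where I f is the mixed Katugampola fractional integral of f. -/
open MeasureTheory Set Filter
open scoped Classical

open scoped Interval NNReal Topology

/-!
For `α ≥ 1` and `-1 < p ≤ 0` the Katugampola kernel `(x^(p+1) - s^(p+1))^(α-1) s^p` is, on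
`a ≤ s ≤ x ≤ b`, nonnegative, bounded, nondecreasing in `x`, and has mass
`∫ₐˣ = (x^(p+1) - a^(p+1))^α / (α (p+1))`, a Lipschitz function of `x`. Splitting
`∫ₐ^x' - ∫ₐ^x` at `x` then shows that the Volterra operator with this kernel maps bounded
continuous functions to Lipschitz functions. Writing the mixed integral as such an operator in `x`
applied to one in `y` makes `I f` Lipschitz in each variable uniformly in the other, hence
Lipschitz on the rectangle. The graph of a Lipschitz function on a rectangle is a Lipschitz image of
the rectangle that projects Lipschitz onto it, so its Hausdorff dimension is `2`; and it meets
between `C₁ δ⁻²` and `C₂ δ⁻²` cubes of the `δ`-mesh, so both box dimensions are `2`.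
-/

theorem Real.rpow_sub_rpow_le_of_one_le {u v α : ℝ} (hu : 0 ≤ u) (huv : u ≤ v) (hα : 1 ≤ α) :
    v ^ α - u ^ α ≤ α * v ^ (α - 1) * (v - u) := by
  rcases huv.eq_or_lt with rfl | h
  · simp
  have hslope := (convexOn_rpow hα).slope_le_of_hasDerivAt hu (hu.trans huv) h
    (Real.hasDerivAt_rpow_const (Or.inr hα))
  rwa [slope_def_field, div_le_iff₀ (sub_pos.2 h)] at hslope

theorem Real.rpow_sub_rpow_le_of_le_one {u v r : ℝ} (hu : 0 < u) (huv : u ≤ v) (hr₀ : 0 ≤ r)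
    (hr₁ : r ≤ 1) : v ^ r - u ^ r ≤ r * u ^ (r - 1) * (v - u) := by
  rcases huv.eq_or_lt with rfl | h
  · simp
  have hslope := (Real.concaveOn_rpow hr₀ hr₁).slope_le_of_hasDerivAt hu.le (hu.le.trans huv) h
    (Real.hasDerivAt_rpow_const (Or.inl hu.ne'))
  rwa [slope_def_field, div_le_iff₀ (sub_pos.2 h)] at hslope

theorem LipschitzOnWith.of_abs_sub_le_mul_sub {g : ℝ → ℝ} {s : Set ℝ} {L : ℝ}
    (h : ∀ x ∈ s, ∀ y ∈ s, x ≤ y → |g y - g x| ≤ L * (y - x)) :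
    LipschitzOnWith (Real.toNNReal L) g s :=
  LipschitzOnWith.of_dist_le' fun x hx y hy => by
    rw [Real.dist_eq, Real.dist_eq]
    rcases le_total x y with hxy | hxy
    · rw [abs_sub_comm, abs_of_nonpos (sub_nonpos.2 hxy), neg_sub]
      exact h x hx y hy hxy
    · rw [abs_of_nonneg (sub_nonneg.2 hxy)]
      exact h y hy x hx hxy

theorem LipschitzOnWith.uncurry {α β γ : Type*} [PseudoEMetricSpace α] [PseudoEMetricSpace β]
    [PseudoEMetricSpace γ] {f : α → β → γ} {s : Set α} {t : Set β} {Kα Kβ : ℝ≥0}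
    (hα : ∀ b ∈ t, LipschitzOnWith Kα (fun a => f a b) s)
    (hβ : ∀ a ∈ s, LipschitzOnWith Kβ (f a) t) :
    LipschitzOnWith (Kα + Kβ) (Function.uncurry f) (s ×ˢ t) := by
  rintro ⟨a₁, b₁⟩ ⟨ha₁, hb₁⟩ ⟨a₂, b₂⟩ ⟨ha₂, hb₂⟩
  simp only [Function.uncurry, ENNReal.coe_add, add_mul]
  exact (edist_triangle _ (f a₂ b₁) _).trans
    (add_le_add ((hα b₁ hb₁ ha₁ ha₂).trans (mul_right_mono (le_max_left _ _)))
      ((hβ a₂ ha₂ hb₁ hb₂).trans (mul_right_mono (le_max_right _ _))))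

theorem continuousOn_intervalIntegral_of_isCompact {X E : Type*} [TopologicalSpace X]
    [FirstCountableTopology X] [NormedAddCommGroup E] [NormedSpace ℝ E] {F : X → ℝ → E}
    {S : Set X} {c y : ℝ} (hS : IsCompact S)
    (hF : ContinuousOn (Function.uncurry F) (S ×ˢ [[c, y]])) :
    ContinuousOn (fun x => ∫ t in c..y, F x t) S := by
  obtain ⟨M, hM⟩ := (hS.prod isCompact_uIcc).exists_bound_of_continuousOn hF
  have hslice : ∀ x ∈ S, ContinuousOn (F x) [[c, y]] := fun x hx =>
    hF.comp (Continuous.continuousOn (by fun_prop)) fun t ht => mk_mem_prod hx ht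
  intro x₀ hx₀
  refine intervalIntegral.continuousWithinAt_of_dominated_interval (bound := fun _ => M)
    (eventually_mem_nhdsWithin.mono fun x hx =>
      ((hslice x hx).mono uIoc_subset_uIcc).aestronglyMeasurable measurableSet_uIoc)
    (eventually_mem_nhdsWithin.mono fun x hx =>
      ae_of_all _ fun t ht => hM (x, t) (mk_mem_prod hx (uIoc_subset_uIcc ht)))
    intervalIntegrable_const (ae_of_all _ fun t ht => ?_)
  exact (hF.comp (Continuous.continuousOn (by fun_prop)) fun x hx =>
    mk_mem_prod hx (uIoc_subset_uIcc ht)) x₀ hx₀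

section IntegralBounds

variable {k k₁ k₂ h h' : ℝ → ℝ} {a b x K M : ℝ}

theorem abs_integral_mul_le (hax : a ≤ x) (hk : ∀ s ∈ Icc a x, |k s| ≤ K)
    (hh : ∀ s ∈ Icc a x, |h s| ≤ M) : |∫ s in a..x, k s * h s| ≤ K * M * (x - a) := by
  have hK : 0 ≤ K := (abs_nonneg _).trans (hk a ⟨le_rfl, hax⟩)
  have hbound : ∀ s ∈ Ι a x, ‖k s * h s‖ ≤ K * M := fun s hs => by
    rw [uIoc_of_le hax] at hs
    rw [Real.norm_eq_abs, abs_mul]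
    exact mul_le_mul (hk s (Ioc_subset_Icc_self hs)) (hh s (Ioc_subset_Icc_self hs))
      (abs_nonneg _) hK
  simpa [abs_of_nonneg (sub_nonneg.2 hax)] using
    intervalIntegral.norm_integral_le_of_norm_le_const hbound

theorem abs_integral_sub_mul_le (hax : a ≤ x) (hk₁ : IntervalIntegrable k₁ volume a x)
    (hk₂ : IntervalIntegrable k₂ volume a x) (hk : ∀ s ∈ Icc a x, k₁ s ≤ k₂ s)
    (hh : ∀ s ∈ Icc a x, |h s| ≤ M) :
    |∫ s in a..x, (k₂ s - k₁ s) * h s| ≤ M * ((∫ s in a..x, k₂ s) - ∫ s in a..x, k₁ s) := by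
  have hbound : ∀ᵐ s, s ∈ Ioc a x → ‖(k₂ s - k₁ s) * h s‖ ≤ M * (k₂ s - k₁ s) :=
    ae_of_all _ fun s hs => by
      have hks := sub_nonneg.2 (hk s (Ioc_subset_Icc_self hs))
      rw [Real.norm_eq_abs, abs_mul, abs_of_nonneg hks, mul_comm]
      exact mul_le_mul_of_nonneg_right (hh s (Ioc_subset_Icc_self hs)) hks
  rw [← intervalIntegral.integral_sub hk₂ hk₁, ← intervalIntegral.integral_const_mul]
  exact intervalIntegral.norm_integral_le_of_norm_le hax hbound ((hk₂.sub hk₁).const_mul M)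

end IntegralBounds

noncomputable def volterra (k : ℝ → ℝ → ℝ) (a : ℝ) (h : ℝ → ℝ) (x : ℝ) : ℝ :=
  ∫ s in a..x, k x s * h s

section VolterraOperator

variable {k : ℝ → ℝ → ℝ} {h h' : ℝ → ℝ} {a b x K M Λ : ℝ}

theorem volterra_sub_volterra (hax : a ≤ x) (hk : ContinuousOn (k x) (Icc a x))
    (hh : ContinuousOn h (Icc a x)) (hh' : ContinuousOn h' (Icc a x)) :
    volterra k a h x - volterra k a h' x = volterra k a (h - h') x := by
  simp only [volterra, Pi.sub_apply, mul_sub]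
  exact (intervalIntegral.integral_sub ((hk.mul hh).intervalIntegrable_of_Icc hax)
    ((hk.mul hh').intervalIntegrable_of_Icc hax)).symm

theorem lipschitzOnWith_volterra (hk_cont : ∀ x ∈ Icc a b, ContinuousOn (k x) (Icc a b))
    (hk_nonneg : ∀ x ∈ Icc a b, ∀ s ∈ Icc a x, 0 ≤ k x s)
    (hk_le : ∀ x ∈ Icc a b, ∀ s ∈ Icc a x, k x s ≤ K)
    (hk_mono : ∀ x ∈ Icc a b, ∀ x' ∈ Icc a b, x ≤ x' → ∀ s ∈ Icc a x, k x s ≤ k x' s)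
    (hk_mass : ∀ x ∈ Icc a b, ∀ x' ∈ Icc a b, x ≤ x' →
      (∫ s in a..x', k x' s) - ∫ s in a..x, k x s ≤ Λ * (x' - x))
    (hh : ContinuousOn h (Icc a b)) (hM : ∀ s ∈ Icc a b, |h s| ≤ M) :
    LipschitzOnWith (Real.toNNReal (M * (Λ + K))) (volterra k a h) (Icc a b) := by
  refine LipschitzOnWith.of_abs_sub_le_mul_sub fun x hx x' hx' hxx' => ?_
  have ha : a ∈ Icc a b := ⟨le_rfl, hx.1.trans hx.2⟩
  have hint : ∀ {g : ℝ → ℝ} {u v}, ContinuousOn g (Icc a b) → u ∈ Icc a b → v ∈ Icc a b →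
      IntervalIntegrable g volume u v := fun hg hu hv =>
    (hg.mono (uIcc_subset_Icc hu hv)).intervalIntegrable
  have hk_x := hk_cont x hx
  have hk_x' := hk_cont x' hx'
  have hkh : ∀ z ∈ Icc a b, ContinuousOn (fun s => k z s * h s) (Icc a b) := fun z hz =>
    (hk_cont z hz).mul hh
  have hM0 : 0 ≤ M := (abs_nonneg _).trans (hM a ha)
  -- on `[a, x]` the kernel increases pointwise, on `[x, x']` it is merely bounded
  have hsplit : volterra k a h x' - volterra k a h x
      = (∫ s in a..x, (k x' s - k x s) * h s) + ∫ s in x..x', k x' s * h s := by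
    simp only [volterra, sub_mul]
    rw [intervalIntegral.integral_sub (hint (hkh x' hx') ha hx) (hint (hkh x hx) ha hx),
      ← intervalIntegral.integral_add_adjacent_intervals (hint (hkh x' hx') ha hx)
        (hint (hkh x' hx') hx hx')]
    ring
  have hmass : (∫ s in a..x, k x' s) ≤ ∫ s in a..x', k x' s := by
    rw [← intervalIntegral.integral_add_adjacent_intervals (hint hk_x' ha hx) (hint hk_x' hx hx')]
    exact le_add_of_nonneg_right (intervalIntegral.integral_nonneg hxx' fun s hs =>
      hk_nonneg x' hx' s ⟨hx.1.trans hs.1, hs.2⟩)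
  have hfirst := abs_integral_sub_mul_le hx.1 (hint hk_x ha hx) (hint hk_x' ha hx)
    (hk_mono x hx x' hx' hxx') fun s hs => hM s ⟨hs.1, hs.2.trans hx.2⟩
  have hsecond := abs_integral_mul_le (k := k x') (h := h) hxx'
    (fun s hs => (abs_of_nonneg (hk_nonneg x' hx' s ⟨hx.1.trans hs.1, hs.2⟩)).trans_le
      (hk_le x' hx' s ⟨hx.1.trans hs.1, hs.2⟩)) fun s hs => hM s ⟨hx.1.trans hs.1, hs.2.trans hx'.2⟩
  rw [hsplit]
  calc _ ≤ _ := abs_add_le _ _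
    _ ≤ M * (Λ * (x' - x)) + K * M * (x' - x) := by
        gcongr
        exact hfirst.trans (by gcongr; linarith [hk_mass x hx x' hx' hxx'])
    _ = M * (Λ + K) * (x' - x) := by ring

end VolterraOperator

noncomputable def katKernel (p α x s : ℝ) : ℝ := (x ^ (p + 1) - s ^ (p + 1)) ^ (α - 1) * s ^ p

section KatKernel

variable {p α a b x x' s M : ℝ} {h : ℝ → ℝ}

theorem katKernel_nonneg (hp : -1 < p) (hs : 0 ≤ s) (hsx : s ≤ x) : 0 ≤ katKernel p α x s :=
  mul_nonneg (Real.rpow_nonneg (sub_nonneg.2 (Real.rpow_le_rpow hs hsx (by linarith))) _)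
    (Real.rpow_nonneg hs _)

theorem katKernel_mono (hp : -1 < p) (hα : 1 ≤ α) (hs : 0 ≤ s) (hsx : s ≤ x) (hxx' : x ≤ x') :
    katKernel p α x s ≤ katKernel p α x' s := by
  have hp1 : 0 ≤ p + 1 := by linarith
  unfold katKernel
  gcongr
  · exact sub_nonneg.2 (Real.rpow_le_rpow hs hsx hp1)
  · linarith

theorem katKernel_le (ha : 0 < a) (hp : -1 < p) (hp0 : p ≤ 0) (hα : 1 ≤ α) (has : a ≤ s)
    (hsx : s ≤ x) (hxb : x ≤ b) : katKernel p α x s ≤ (b ^ (p + 1)) ^ (α - 1) * a ^ p := by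
  have hs : 0 ≤ s := ha.le.trans has
  have hbase : x ^ (p + 1) - s ^ (p + 1) ≤ b ^ (p + 1) := by
    linarith [Real.rpow_le_rpow (hs.trans hsx) hxb (by linarith : 0 ≤ p + 1),
      Real.rpow_nonneg hs (p + 1)]
  exact mul_le_mul (Real.rpow_le_rpow (sub_nonneg.2 (Real.rpow_le_rpow hs hsx (by linarith)))
    hbase (by linarith)) (Real.rpow_le_rpow_of_nonpos ha has hp0) (Real.rpow_nonneg hs _)
    (Real.rpow_nonneg (Real.rpow_nonneg (hs.trans (hsx.trans hxb)) _) _)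

theorem abs_katKernel_le (ha : 0 < a) (hp : -1 < p) (hp0 : p ≤ 0) (hα : 1 ≤ α)
    (has : a ≤ s) (hsx : s ≤ x) (hxb : x ≤ b) :
    |katKernel p α x s| ≤ (b ^ (p + 1)) ^ (α - 1) * a ^ p := by
  rw [abs_of_nonneg (katKernel_nonneg hp (ha.le.trans has) hsx)]
  exact katKernel_le ha hp hp0 hα has hsx hxb

theorem continuousOn_katKernel (hα : 1 ≤ α) : ContinuousOn (katKernel p α x) (Ioi 0) := by
  intro s hs
  have hs0 : s ≠ 0 := (mem_Ioi.1 hs).ne'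
  have hbase : ContinuousAt (fun s : ℝ => x ^ (p + 1) - s ^ (p + 1)) s :=
    continuousAt_const.sub (Real.continuousAt_rpow_const s (p + 1) (Or.inl hs0))
  exact ((hbase.rpow_const (Or.inr (by linarith))).mul
    (Real.continuousAt_rpow_const s p (Or.inl hs0))).continuousWithinAt

theorem hasDerivAt_katKernel_primitive (hp : -1 < p) (hα : 1 ≤ α) (hs : 0 < s) :
    HasDerivAt (fun s => -(x ^ (p + 1) - s ^ (p + 1)) ^ α / (α * (p + 1)))
      (katKernel p α x s) s := by
  have hpow : HasDerivAt (fun s : ℝ => s ^ (p + 1)) ((p + 1) * s ^ p) s := by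
    simpa using Real.hasDerivAt_rpow_const (x := s) (p := p + 1) (Or.inl hs.ne')
  refine (((Real.hasDerivAt_rpow_const (Or.inr hα)).comp s (hpow.const_sub _)).neg.div_const
    (α * (p + 1))).congr_deriv ?_
  have hp1 : p + 1 ≠ 0 := by linarith
  have hα0 : α ≠ 0 := by linarith
  unfold katKernel
  field_simp

theorem integral_katKernel (ha : 0 < a) (hax : a ≤ x) (hp : -1 < p) (hα : 1 ≤ α) :
    ∫ s in a..x, katKernel p α x s = (x ^ (p + 1) - a ^ (p + 1)) ^ α / (α * (p + 1)) := by
  have hpos : ∀ s ∈ [[a, x]], 0 < s := fun s hs =>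
    ha.trans_le (by rw [uIcc_of_le hax] at hs; exact hs.1)
  rw [intervalIntegral.integral_eq_sub_of_hasDerivAt
    (fun s hs => hasDerivAt_katKernel_primitive hp hα (hpos s hs))
    ((continuousOn_katKernel hα).mono hpos).intervalIntegrable]
  simp [Real.zero_rpow (by linarith : α ≠ 0), neg_div]

theorem integral_katKernel_sub_le (ha : 0 < a) (hp : -1 < p) (hp0 : p ≤ 0) (hα : 1 ≤ α)
    (hax : a ≤ x) (hxx' : x ≤ x') (hx'b : x' ≤ b) :
    (∫ s in a..x', katKernel p α x' s) - ∫ s in a..x, katKernel p α x s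
      ≤ (b ^ (p + 1)) ^ (α - 1) * a ^ p * (x' - x) := by
  have hp1 : 0 < p + 1 := by linarith
  have hx : 0 < x := ha.trans_le hax
  rw [integral_katKernel ha (hax.trans hxx') hp hα, integral_katKernel ha hax hp hα,
    div_sub_div_same, div_le_iff₀ (mul_pos (by linarith) hp1)]
  have hU : 0 ≤ x ^ (p + 1) - a ^ (p + 1) := sub_nonneg.2 (Real.rpow_le_rpow ha.le hax hp1.le)
  have hUU' : x ^ (p + 1) - a ^ (p + 1) ≤ x' ^ (p + 1) - a ^ (p + 1) :=
    sub_le_sub_right (Real.rpow_le_rpow hx.le hxx' hp1.le) _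
  have hx'b' : x' ^ (p + 1) ≤ b ^ (p + 1) := Real.rpow_le_rpow (hx.le.trans hxx') hx'b hp1.le
  have hU'b : (x' ^ (p + 1) - a ^ (p + 1)) ^ (α - 1) ≤ (b ^ (p + 1)) ^ (α - 1) :=
    Real.rpow_le_rpow (hU.trans hUU') (by linarith [Real.rpow_nonneg ha.le (p + 1)]) (by linarith)
  have hconcave : x' ^ (p + 1) - x ^ (p + 1) ≤ (p + 1) * a ^ p * (x' - x) := by
    have h := Real.rpow_sub_rpow_le_of_le_one hx hxx' hp1.le (by linarith)
    rw [add_sub_cancel_right] at h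
    exact h.trans (mul_le_mul_of_nonneg_right (mul_le_mul_of_nonneg_left
      (Real.rpow_le_rpow_of_nonpos ha hax hp0) hp1.le) (sub_nonneg.2 hxx'))
  calc (x' ^ (p + 1) - a ^ (p + 1)) ^ α - (x ^ (p + 1) - a ^ (p + 1)) ^ α
      ≤ α * (x' ^ (p + 1) - a ^ (p + 1)) ^ (α - 1) * (x' ^ (p + 1) - x ^ (p + 1)) := by
        simpa using Real.rpow_sub_rpow_le_of_one_le hU hUU' hα
    _ ≤ α * (b ^ (p + 1)) ^ (α - 1) * ((p + 1) * a ^ p * (x' - x)) := by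
        have hb : 0 ≤ (b ^ (p + 1)) ^ (α - 1) :=
          Real.rpow_nonneg (Real.rpow_nonneg (hx.le.trans (hxx'.trans hx'b)) _) _
        gcongr
        linarith [Real.rpow_le_rpow hx.le hxx' hp1.le]
    _ = _ := by ring

theorem lipschitzOnWith_volterra_katKernel (ha : 0 < a) (hp : -1 < p) (hp0 : p ≤ 0)
    (hα : 1 ≤ α) (hh : ContinuousOn h (Icc a b)) (hM : ∀ s ∈ Icc a b, |h s| ≤ M) :
    LipschitzOnWith (Real.toNNReal (M * (2 * ((b ^ (p + 1)) ^ (α - 1) * a ^ p))))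
      (volterra (katKernel p α) a h) (Icc a b) := by
  rw [two_mul]
  exact lipschitzOnWith_volterra
    (fun _ _ => (continuousOn_katKernel hα).mono fun s hs => ha.trans_le hs.1)
    (fun _ _ s hs => katKernel_nonneg hp (ha.le.trans hs.1) hs.2)
    (fun _ hx s hs => katKernel_le ha hp hp0 hα hs.1 hs.2 hx.2)
    (fun _ _ _ _ hxx' s hs => katKernel_mono hp hα (ha.le.trans hs.1) hs.2 hxx')
    (fun _ hx _ hx' hxx' => integral_katKernel_sub_le ha hp hp0 hα hx.1 hxx' hx'.2) hh hM

end KatKernel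

theorem mixedKI_eq_volterra (a c p q α β : ℝ) (f : ℝ → ℝ → ℝ) (x y : ℝ) :
    mixedKI a c p q α β f x y =
      ((p + 1) ^ (1 - α) * (q + 1) ^ (1 - β) / (Real.Gamma α * Real.Gamma β)) *
        volterra (katKernel p α) a (fun s => volterra (katKernel q β) c (f s) y) x := by
  unfold mixedKI volterra katKernel
  congr 1
  refine intervalIntegral.integral_congr fun s _ => ?_
  simp only
  rw [← intervalIntegral.integral_const_mul]
  exact intervalIntegral.integral_congr fun t _ => by ring

section MixedKI

variable {a b c d p q α β M : ℝ} {f : ℝ → ℝ → ℝ}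

theorem continuousOn_volterra_katKernel_of_uncurry (hc : 0 < c) (hβ : 1 ≤ β)
    (hf : ContinuousOn (Function.uncurry f) (Icc a b ×ˢ Icc c d)) {y : ℝ} (hy : y ∈ Icc c d) :
    ContinuousOn (fun s => volterra (katKernel q β) c (f s) y) (Icc a b) := by
  have hcy : [[c, y]] ⊆ Icc c d := by
    rw [uIcc_of_le hy.1]; exact Icc_subset_Icc le_rfl hy.2
  refine continuousOn_intervalIntegral_of_isCompact isCompact_Icc
    (((continuousOn_katKernel hβ).comp continuousOn_snd fun st hst => ?_).mul
      (hf.mono (prod_mono subset_rfl hcy)))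
  exact hc.trans_le (hcy hst.2).1

theorem abs_volterra_katKernel_le (hc : 0 < c) (hq : -1 < q) (hq0 : q ≤ 0) (hβ : 1 ≤ β)
    (hM : ∀ s ∈ Icc a b, ∀ t ∈ Icc c d, |f s t| ≤ M) {s y : ℝ} (hs : s ∈ Icc a b)
    (hy : y ∈ Icc c d) :
    |volterra (katKernel q β) c (f s) y| ≤ (d ^ (q + 1)) ^ (β - 1) * c ^ q * M * (d - c) := by
  have hM0 : 0 ≤ M := (abs_nonneg _).trans (hM s hs c ⟨le_rfl, hy.1.trans hy.2⟩)
  calc _ ≤ (d ^ (q + 1)) ^ (β - 1) * c ^ q * M * (y - c) :=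
        abs_integral_mul_le hy.1 (fun t ht => abs_katKernel_le hc hq hq0 hβ ht.1 ht.2 hy.2)
          fun t ht => hM s hs t ⟨ht.1, ht.2.trans hy.2⟩
    _ ≤ _ := by
        have : 0 ≤ (d ^ (q + 1)) ^ (β - 1) * c ^ q :=
          mul_nonneg (Real.rpow_nonneg (Real.rpow_nonneg (hc.le.trans (hy.1.trans hy.2)) _) _)
            (Real.rpow_nonneg hc.le _)
        gcongr
        exact hy.2

theorem exists_lipschitzOnWith_mixedKI_left (ha : 0 < a) (hc : 0 < c) (hp : -1 < p) (hp0 : p ≤ 0)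
    (hq : -1 < q) (hq0 : q ≤ 0) (hα : 1 ≤ α) (hβ : 1 ≤ β)
    (hf : ContinuousOn (Function.uncurry f) (Icc a b ×ˢ Icc c d))
    (hM : ∀ s ∈ Icc a b, ∀ t ∈ Icc c d, |f s t| ≤ M) :
    ∃ L, ∀ y ∈ Icc c d, LipschitzOnWith L (fun x => mixedKI a c p q α β f x y) (Icc a b) := by
  simp_rw [mixedKI_eq_volterra]
  set C := (p + 1) ^ (1 - α) * (q + 1) ^ (1 - β) / (Real.Gamma α * Real.Gamma β)
  exact ⟨_, fun y hy => (lipschitzWith_smul C).comp_lipschitzOnWith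
    (lipschitzOnWith_volterra_katKernel ha hp hp0 hα
      (continuousOn_volterra_katKernel_of_uncurry hc hβ hf hy)
      fun s hs => abs_volterra_katKernel_le hc hq hq0 hβ hM hs hy)⟩

theorem exists_lipschitzOnWith_mixedKI_right (ha : 0 < a) (hc : 0 < c) (hp : -1 < p)
    (hp0 : p ≤ 0) (hq : -1 < q) (hq0 : q ≤ 0) (hα : 1 ≤ α) (hβ : 1 ≤ β)
    (hf : ContinuousOn (Function.uncurry f) (Icc a b ×ˢ Icc c d))
    (hM : ∀ s ∈ Icc a b, ∀ t ∈ Icc c d, |f s t| ≤ M) :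
    ∃ L, ∀ x ∈ Icc a b, LipschitzOnWith L (fun y => mixedKI a c p q α β f x y) (Icc c d) := by
  set C := (p + 1) ^ (1 - α) * (q + 1) ^ (1 - β) / (Real.Gamma α * Real.Gamma β)
  set K := (b ^ (p + 1)) ^ (α - 1) * a ^ p
  set LF := Real.toNNReal (M * (2 * ((d ^ (q + 1)) ^ (β - 1) * c ^ q)))
  have hF : ∀ s ∈ Icc a b, LipschitzOnWith LF (fun y => volterra (katKernel q β) c (f s) y)
      (Icc c d) := fun s hs =>
    lipschitzOnWith_volterra_katKernel hc hq hq0 hβ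
      (hf.comp (Continuous.continuousOn (by fun_prop)) fun t ht => mk_mem_prod hs ht)
      (hM s hs)
  refine ⟨Real.toNNReal (|C| * (K * LF * (b - a))), fun x hx =>
    LipschitzOnWith.of_dist_le' fun y hy y' hy' => ?_⟩
  have hK : 0 ≤ K := (abs_nonneg _).trans (abs_katKernel_le ha hp hp0 hα le_rfl hx.1 hx.2)
  have hkernel : ContinuousOn (katKernel p α x) (Icc a x) :=
    (continuousOn_katKernel hα).mono fun s hs => ha.trans_le hs.1
  have hslice : ∀ z ∈ Icc c d,
      ContinuousOn (fun s => volterra (katKernel q β) c (f s) z) (Icc a x) := fun z hz =>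
    (continuousOn_volterra_katKernel_of_uncurry hc hβ hf hz).mono (Icc_subset_Icc le_rfl hx.2)
  rw [Real.dist_eq, mixedKI_eq_volterra, mixedKI_eq_volterra, ← mul_sub, abs_mul,
    volterra_sub_volterra hx.1 hkernel (hslice y hy) (hslice y' hy')]
  calc |C| * |volterra (katKernel p α) a _ x|
      ≤ |C| * (K * (LF * dist y y') * (x - a)) := by
        gcongr
        exact abs_integral_mul_le hx.1 (fun s hs => abs_katKernel_le ha hp hp0 hα hs.1 hs.2 hx.2)
          fun s hs => (Real.dist_eq _ _).symm.trans_le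
            ((hF s ⟨hs.1, hs.2.trans hx.2⟩).dist_le_mul y hy y' hy')
    _ ≤ |C| * (K * LF * (b - a)) * dist y y' := by
        rw [show K * (LF * dist y y') * (x - a) = K * LF * (x - a) * dist y y' by ring,
          ← mul_assoc]
        gcongr
        exact hx.2

theorem exists_lipschitzOnWith_mixedKI (ha : 0 < a) (hc : 0 < c) (hp : -1 < p) (hp0 : p ≤ 0)
    (hq : -1 < q) (hq0 : q ≤ 0) (hα : 1 ≤ α) (hβ : 1 ≤ β)
    (hf : ContinuousOn (Function.uncurry f) (Icc a b ×ˢ Icc c d)) :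
    ∃ L, LipschitzOnWith L (Function.uncurry (mixedKI a c p q α β f)) (Icc a b ×ˢ Icc c d) := by
  obtain ⟨M, hM⟩ := (isCompact_Icc.prod isCompact_Icc).exists_bound_of_continuousOn hf
  have hM' : ∀ s ∈ Icc a b, ∀ t ∈ Icc c d, |f s t| ≤ M := fun s hs t ht => hM (s, t) ⟨hs, ht⟩
  obtain ⟨Lx, hLx⟩ := exists_lipschitzOnWith_mixedKI_left ha hc hp hp0 hq hq0 hα hβ hf hM'
  obtain ⟨Ly, hLy⟩ := exists_lipschitzOnWith_mixedKI_right ha hc hp hp0 hq hq0 hα hβ hf hM'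
  exact ⟨Lx + Ly, LipschitzOnWith.uncurry hLx hLy⟩

end MixedKI

section GraphDimH

variable {a b c d : ℝ} {G : ℝ → ℝ → ℝ} {K : ℝ≥0}

theorem dimH_graphRect_of_lipschitzOnWith (hab : a < b) (hcd : c < d)
    (hG : LipschitzOnWith K (Function.uncurry G) (Icc a b ×ˢ Icc c d)) :
    dimH (graphRect a b c d G) = 2 := by
  have hgraph : graphRect a b c d G
      = (fun z : ℝ × ℝ => (z.1, z.2, G z.1 z.2)) '' (Icc a b ×ˢ Icc c d) := by
    ext ⟨x, y, w⟩
    simp only [graphRect, mem_ofPred_eq, mem_image, mem_prod, Prod.mk.injEq, Prod.exists]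
    constructor
    · rintro ⟨hx, hy, rfl⟩
      exact ⟨x, y, ⟨hx, hy⟩, rfl, rfl, rfl⟩
    · rintro ⟨x, y, ⟨hx, hy⟩, rfl, rfl, rfl⟩
      exact ⟨hx, hy, rfl⟩
  have hproj : (fun r : ℝ × ℝ × ℝ => (r.1, r.2.1)) '' graphRect a b c d G
      = Icc a b ×ˢ Icc c d := by
    rw [hgraph, image_image]
    exact image_id' _
  have hrect : dimH (Icc a b ×ˢ Icc c d) = 2 := by
    rw [Real.dimH_of_nonempty_interior, Module.finrank_prod, Module.finrank_self]
    · norm_num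
    rw [interior_prod_eq, interior_Icc, interior_Icc]
    exact (nonempty_Ioo.2 hab).prod (nonempty_Ioo.2 hcd)
  apply le_antisymm
  · rw [hgraph, ← hrect]
    exact (LipschitzWith.prod_fst.lipschitzOnWith.prodMk
      (LipschitzWith.prod_snd.lipschitzOnWith.prodMk hG)).dimH_image_le
  · rw [← hrect, ← hproj]
    exact (LipschitzWith.prod_fst.prodMk
      (LipschitzWith.prod_fst.comp LipschitzWith.prod_snd)).dimH_image_le _

end GraphDimH

noncomputable def meshIndices (δ lo hi : ℝ) : Finset ℤ := Finset.Icc (⌈lo / δ⌉ - 1) ⌊hi / δ⌋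

noncomputable def innerMeshIndices (δ lo hi : ℝ) : Finset ℤ := Finset.Ico ⌈lo / δ⌉ ⌊hi / δ⌋

section MeshIndices

variable {δ lo hi x : ℝ}

theorem mem_meshIndices {i : ℤ} (hδ : 0 < δ) (hlo : lo ≤ x) (hhi : x ≤ hi) (hi₁ : i * δ ≤ x)
    (hi₂ : x ≤ (i + 1) * δ) : i ∈ meshIndices δ lo hi := by
  refine Finset.mem_Icc.2 ⟨?_, Int.le_floor.2 ((le_div_iff₀ hδ).2 (by linarith))⟩
  rw [sub_le_iff_le_add, Int.ceil_le, div_le_iff₀ hδ]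
  push_cast
  linarith

theorem card_meshIndices_le (hδ : 0 < δ) (hlohi : lo ≤ hi) :
    ((meshIndices δ lo hi).card : ℝ) ≤ (hi - lo) / δ + 2 := by
  have hfloor : (⌊hi / δ⌋ : ℝ) ≤ hi / δ := Int.floor_le _
  have hceil : lo / δ ≤ ⌈lo / δ⌉ := Int.le_ceil _
  have hdiv : (hi - lo) / δ = hi / δ - lo / δ := sub_div _ _ _
  have hnonneg : 0 ≤ ⌊hi / δ⌋ + 1 - (⌈lo / δ⌉ - 1) := by
    have : lo / δ ≤ hi / δ := div_le_div_of_nonneg_right hlohi hδ.le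
    have : (⌈lo / δ⌉ : ℝ) < lo / δ + 1 := Int.ceil_lt_add_one _
    have : hi / δ - 1 < (⌊hi / δ⌋ : ℝ) := Int.sub_one_lt_floor _
    exact_mod_cast (show (0 : ℝ) ≤ ⌊hi / δ⌋ + 1 - (⌈lo / δ⌉ - 1) by linarith)
  rw [meshIndices, Int.card_Icc, ← Int.cast_natCast, Int.toNat_of_nonneg hnonneg]
  push_cast
  linarith

theorem mem_Icc_of_mem_innerMeshIndices {i : ℤ} (hδ : 0 < δ)
    (hmem : i ∈ innerMeshIndices δ lo hi) : lo ≤ (i : ℝ) * δ ∧ ((i : ℝ) + 1) * δ ≤ hi := by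
  obtain ⟨hlo, hhi⟩ := Finset.mem_Ico.1 hmem
  refine ⟨(div_le_iff₀ hδ).1 (Int.ceil_le.1 hlo), (le_div_iff₀ hδ).1 ?_⟩
  exact_mod_cast Int.le_floor.1 (Int.add_one_le_iff.2 hhi)

theorem card_innerMeshIndices_ge :
    (hi - lo) / δ - 2 ≤ ((innerMeshIndices δ lo hi).card : ℝ) := by
  have hfloor : hi / δ - 1 < (⌊hi / δ⌋ : ℝ) := Int.sub_one_lt_floor _
  have hceil : (⌈lo / δ⌉ : ℝ) < lo / δ + 1 := Int.ceil_lt_add_one _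
  have htoNat : (⌊hi / δ⌋ : ℝ) - ⌈lo / δ⌉ ≤ (⌊hi / δ⌋ - ⌈lo / δ⌉).toNat := by
    exact_mod_cast Int.self_le_toNat _
  rw [innerMeshIndices, Int.card_Ico, sub_div]
  linarith

end MeshIndices

def meshCubesMeeting (δ : ℝ) (S : Set (ℝ × ℝ × ℝ)) : Set (ℤ × ℤ × ℤ) :=
  {p | (meshCube δ p.1 p.2.1 p.2.2 ∩ S).Nonempty}

theorem meshCount_eq_ncard (δ : ℝ) (S : Set (ℝ × ℝ × ℝ)) :
    meshCount δ S = (meshCubesMeeting δ S).ncard :=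
  Nat.card_coe_set_eq _

theorem dist_projIcc_le {a b x u δ : ℝ} (hab : a ≤ b) (hx : x ∈ Icc a b) (hux : u ≤ x)
    (hxu : x ≤ u + δ) : dist x (projIcc a b hab u) ≤ δ := by
  have h := (LipschitzWith.projIcc hab).dist_le_mul x u
  rw [projIcc_of_mem hab hx, Subtype.dist_eq, NNReal.coe_one, one_mul] at h
  exact h.trans (by rw [Real.dist_eq, abs_of_nonneg (sub_nonneg.2 hux)]; linarith)

section GraphCount

variable {a b c d δ : ℝ} {G : ℝ → ℝ → ℝ} {K : ℝ≥0}

theorem meshCubesMeeting_graphRect_subset (hab : a ≤ b) (hcd : c ≤ d)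
    (hG : LipschitzOnWith K (Function.uncurry G) (Icc a b ×ˢ Icc c d)) (hδ : 0 < δ) :
    let z : ℤ × ℤ → ℝ := fun ij => G (projIcc a b hab (ij.1 * δ)) (projIcc c d hcd (ij.2 * δ))
    meshCubesMeeting δ (graphRect a b c d G) ⊆ ↑((meshIndices δ a b ×ˢ meshIndices δ c d).biUnion
      fun ij => (meshIndices δ (z ij - K * δ) (z ij + K * δ)).image fun k => (ij.1, ij.2, k)) := by
  intro z
  rintro ⟨i, j, k⟩ ⟨⟨x, y, w⟩, ⟨⟨hix, hxi⟩, ⟨hjy, hyj⟩, ⟨hkw, hwk⟩⟩, hx, hy, hw⟩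
  simp only at hix hxi hjy hyj hkw hwk hx hy hw
  have hdist : dist (x, y) (↑(projIcc a b hab (i * δ)), ↑(projIcc c d hcd (j * δ))) ≤ δ :=
    max_le (dist_projIcc_le hab hx hix (by linarith)) (dist_projIcc_le hcd hy hjy (by linarith))
  have hz : |w - z (i, j)| ≤ K * δ := by
    rw [hw, ← Real.dist_eq]
    exact (hG.dist_le_mul (x, y) ⟨hx, hy⟩ _ ⟨(projIcc a b hab _).2, (projIcc c d hcd _).2⟩).trans
      (mul_le_mul_of_nonneg_left hdist K.2)
  rw [abs_le] at hz
  refine Finset.mem_biUnion.2 ⟨(i, j), Finset.mem_product.2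
    ⟨mem_meshIndices hδ hx.1 hx.2 hix hxi, mem_meshIndices hδ hy.1 hy.2 hjy hyj⟩,
    Finset.mem_image.2 ⟨k, mem_meshIndices hδ (by linarith) (by linarith) hkw hwk, rfl⟩⟩

theorem meshCount_graphRect_le (hab : a ≤ b) (hcd : c ≤ d)
    (hG : LipschitzOnWith K (Function.uncurry G) (Icc a b ×ˢ Icc c d)) (hδ : 0 < δ) :
    (meshCount δ (graphRect a b c d G) : ℝ)
      ≤ ((b - a) / δ + 2) * ((d - c) / δ + 2) * (2 * K + 2) := by
  rw [meshCount_eq_ncard]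
  refine (Nat.cast_le.2 ((Set.ncard_le_ncard (meshCubesMeeting_graphRect_subset hab hcd hG hδ)
    (Finset.finite_toSet _)).trans_eq (Set.ncard_coe_finset _))).trans ?_
  refine (Nat.cast_le.2 Finset.card_biUnion_le).trans ?_
  push_cast
  have hcolumn : ∀ z : ℝ, ((meshIndices δ (z - K * δ) (z + K * δ)).card : ℝ) ≤ 2 * K + 2 :=
    fun z => (card_meshIndices_le hδ (by nlinarith [K.2])).trans_eq (by field_simp; ring)
  refine (Finset.sum_le_sum fun ij _ => (Nat.cast_le.2 Finset.card_image_le).trans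
    (hcolumn _)).trans ?_
  rw [Finset.sum_const, nsmul_eq_mul, Finset.card_product, Nat.cast_mul]
  gcongr
  · exact card_meshIndices_le hδ hab
  · exact card_meshIndices_le hδ hcd

theorem meshCubesMeeting_graphRect_finite (hab : a ≤ b) (hcd : c ≤ d)
    (hG : LipschitzOnWith K (Function.uncurry G) (Icc a b ×ˢ Icc c d)) (hδ : 0 < δ) :
    (meshCubesMeeting δ (graphRect a b c d G)).Finite :=
  (Finset.finite_toSet _).subset (meshCubesMeeting_graphRect_subset hab hcd hG hδ)

theorem le_meshCount_graphRect (hδ : 0 < δ) (hcd : 2 * δ ≤ d - c)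
    (hfin : (meshCubesMeeting δ (graphRect a b c d G)).Finite) :
    ((b - a) / δ - 2) * ((d - c) / δ - 2) ≤ (meshCount δ (graphRect a b c d G) : ℝ) := by
  set e : ℤ × ℤ → ℤ × ℤ × ℤ := fun ij => (ij.1, ij.2, ⌊G (ij.1 * δ) (ij.2 * δ) / δ⌋)
  have he : Function.Injective e := fun ij ij' h => by
    simp only [e, Prod.mk.injEq] at h
    exact Prod.ext h.1 h.2.1
  have hsub : e '' ↑(innerMeshIndices δ a b ×ˢ innerMeshIndices δ c d)
      ⊆ meshCubesMeeting δ (graphRect a b c d G) := by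
    rintro _ ⟨⟨i, j⟩, hij, rfl⟩
    obtain ⟨hi, hj⟩ := Finset.mem_product.1 hij
    obtain ⟨hai, hib⟩ := mem_Icc_of_mem_innerMeshIndices hδ hi
    obtain ⟨hcj, hjd⟩ := mem_Icc_of_mem_innerMeshIndices hδ hj
    set w := G (i * δ) (j * δ)
    have hw₁ : (⌊w / δ⌋ : ℝ) * δ ≤ w := (le_div_iff₀ hδ).1 (Int.floor_le _)
    have hw₂ : w ≤ ((⌊w / δ⌋ : ℝ) + 1) * δ := (div_le_iff₀ hδ).1 (Int.lt_floor_add_one _).le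
    refine ⟨((i : ℝ) * δ, (j : ℝ) * δ, w), ⟨⟨le_rfl, by linarith⟩, ⟨le_rfl, by linarith⟩,
      ⟨hw₁, hw₂⟩⟩, ⟨hai, by linarith⟩, ⟨hcj, by linarith⟩, rfl⟩
  have hcard := Set.ncard_le_ncard hsub hfin
  rw [Set.ncard_image_of_injective _ he, Set.ncard_coe_finset, Finset.card_product] at hcard
  rw [meshCount_eq_ncard]
  calc ((b - a) / δ - 2) * ((d - c) / δ - 2)
      ≤ ((innerMeshIndices δ a b).card : ℝ) * (innerMeshIndices δ c d).card := by
        have : 2 ≤ (d - c) / δ := (le_div_iff₀ hδ).2 (by linarith)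
        exact mul_le_mul card_innerMeshIndices_ge card_innerMeshIndices_ge (by linarith)
          (Nat.cast_nonneg _)
    _ ≤ _ := by exact_mod_cast hcard

end GraphCount

theorem tendsto_log_div_neg_log_of_bounds {N : ℝ → ℝ} {s C₁ C₂ : ℝ} (hC₁ : 0 < C₁)
    (hN : ∀ᶠ δ in 𝓝[>] 0, C₁ ≤ δ ^ s * N δ ∧ δ ^ s * N δ ≤ C₂) :
    Tendsto (fun δ => Real.log (N δ) / -Real.log δ) (𝓝[>] 0) (𝓝 s) := by
  have hlog : Tendsto (fun δ : ℝ => -Real.log δ) (𝓝[>] 0) atTop :=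
    tendsto_neg_atBot_atTop.comp Real.tendsto_log_nhdsGT_zero
  have hlim : ∀ C : ℝ, Tendsto (fun δ => s + Real.log C / -Real.log δ) (𝓝[>] 0) (𝓝 s) :=
    fun C => by simpa using tendsto_const_nhds.add (tendsto_const_nhds.div_atTop hlog)
  have hsplit : ∀ᶠ δ in 𝓝[>] 0, Real.log C₁ ≤ Real.log (δ ^ s * N δ) ∧
      Real.log (δ ^ s * N δ) ≤ Real.log C₂ ∧
      Real.log (N δ) / -Real.log δ = s + Real.log (δ ^ s * N δ) / -Real.log δ := by
    filter_upwards [hN, Ioo_mem_nhdsGT one_pos] with δ ⟨h₁, h₂⟩ ⟨hδ, hδ1⟩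
    have hpos : 0 < δ ^ s * N δ := hC₁.trans_le h₁
    have hNpos : 0 < N δ := pos_of_mul_pos_right hpos (Real.rpow_nonneg hδ.le s)
    have hl : Real.log δ ≠ 0 := (Real.log_neg hδ hδ1).ne
    refine ⟨Real.log_le_log hC₁ h₁, Real.log_le_log hpos h₂, ?_⟩
    rw [Real.log_mul (Real.rpow_pos_of_pos hδ s).ne' hNpos.ne', Real.log_rpow hδ]
    field_simp
    ring
  refine tendsto_of_tendsto_of_tendsto_of_le_of_le' (hlim C₁) (hlim C₂) ?_ ?_
  · filter_upwards [hsplit, hlog.eventually_gt_atTop 0] with δ ⟨h₁, _, heq⟩ hl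
    rw [heq]
    gcongr
  · filter_upwards [hsplit, hlog.eventually_gt_atTop 0] with δ ⟨_, h₂, heq⟩ hl
    rw [heq]
    gcongr

section GraphDim

variable {a b c d : ℝ} {G : ℝ → ℝ → ℝ} {K : ℝ≥0}

theorem tendsto_log_meshCount_graphRect (hab : a < b) (hcd : c < d)
    (hG : LipschitzOnWith K (Function.uncurry G) (Icc a b ×ˢ Icc c d)) :
    Tendsto (fun δ => Real.log (meshCount δ (graphRect a b c d G)) / -Real.log δ) (𝓝[>] 0)
      (𝓝 2) := by
  have hba : 0 < b - a := sub_pos.2 hab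
  have hdc : 0 < d - c := sub_pos.2 hcd
  refine tendsto_log_div_neg_log_of_bounds (C₁ := (b - a) * (d - c) / 4)
    (C₂ := (b - a + 2) * (d - c + 2) * (2 * K + 2)) (by positivity) ?_
  filter_upwards [Ioo_mem_nhdsGT (lt_min one_pos (lt_min (div_pos hba four_pos)
    (div_pos hdc four_pos)))] with δ ⟨hδ, hδ₀⟩
  simp only [lt_min_iff] at hδ₀
  obtain ⟨hδ₁, hδa, hδc⟩ := hδ₀
  have hlow := le_meshCount_graphRect hδ (by linarith)
    (meshCubesMeeting_graphRect_finite hab.le hcd.le hG hδ)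
  have hup := meshCount_graphRect_le hab.le hcd.le hG hδ
  rw [Real.rpow_two]
  constructor
  · calc (b - a) * (d - c) / 4 ≤ (b - a - 2 * δ) * (d - c - 2 * δ) := by nlinarith
      _ = δ ^ 2 * (((b - a) / δ - 2) * ((d - c) / δ - 2)) := by field_simp
      _ ≤ _ := by gcongr
  · calc δ ^ 2 * (meshCount δ (graphRect a b c d G) : ℝ)
        ≤ δ ^ 2 * (((b - a) / δ + 2) * ((d - c) / δ + 2) * (2 * K + 2)) := by gcongr
      _ = (b - a + 2 * δ) * (d - c + 2 * δ) * (2 * K + 2) := by field_simp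
      _ ≤ _ := by gcongr <;> linarith

end GraphDim

/-- for `α, β ≥ 1` the graph of the mixed Katugampola fractional
integral of a continuous function has Hausdorff and box dimension `2`. -/
theorem dim_graph_mixedKI_of_one_le (a b c d p q α β : ℝ)
    (ha : 0 < a) (hab : a < b) (hc : 0 < c) (hcd : c < d)
    (hp : -1 < p) (hp0 : p ≤ 0) (hq : -1 < q) (hq0 : q ≤ 0)
    (hα : 1 ≤ α) (hβ : 1 ≤ β)
    (f : ℝ → ℝ → ℝ)
    (hf : ContinuousOn (fun pt : ℝ × ℝ => f pt.1 pt.2) (Icc a b ×ˢ Icc c d)) :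
    dimH (graphRect a b c d (fun x y => mixedKI a c p q α β f x y)) = 2 ∧
    lowerBoxDim (graphRect a b c d (fun x y => mixedKI a c p q α β f x y)) = 2 ∧
    upperBoxDim (graphRect a b c d (fun x y => mixedKI a c p q α β f x y)) = 2 := by
  obtain ⟨L, hL⟩ := exists_lipschitzOnWith_mixedKI ha hc hp hp0 hq hq0 hα hβ hf
  have hbox := tendsto_log_meshCount_graphRect hab hcd hL
  exact ⟨dimH_graphRect_of_lipschitzOnWith hab hcd hL, hbox.liminf_eq, hbox.limsup_eq⟩
end
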